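/- Let Z be the Pauli Z matrix and consider p_id, p_ud ≥ 0 with p_id + p_ud = 1, and real angles φ, φ₁. Let ρ = p_id |r_φ⟩⟨r_φ| + p_ud |r_{φ₁}⟩⟨r_{φ₁}| where |r_α⟩ = exp(iαZ)|+⟩. Then the trace distance (1/2)‖ρ − |r_φ⟩⟨r_φ|‖₁ ≤ p_ud · |sin(φ − φ₁)|. -/

import Mathlib

/-! Both states `|r_α⟩⟨r_α|` have diagonal `(1/2, 1/2)`, so `ρ - |r_φ⟩⟨r_φ|` equals
`p_ud (|r_{φ₁}⟩⟨r_{φ₁}| - |r_φ⟩⟨r_φ|)`, a Hermitian matrix with zero diagonal and off-diagonal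
entry `c = p_ud (e^{2iφ₁} - e^{2iφ}) / 2`. Its eigenvalues are `±|c|` (trace `0`, determinant
`-|c|²`), so the trace distance is exactly `|c| = p_ud |sin(φ - φ₁)|`. -/

open Matrix NormedSpace

/-- The trace (nuclear) norm of a Hermitian matrix: the sum of the absolute values of its
eigenvalues (defined as `0` on non-Hermitian matrices, which never occurs below). -/
noncomputable def traceNorm {n : Type*} [Fintype n] [DecidableEq n]
    (M : Matrix n n ℂ) : ℝ :=
  if h : M.IsHermitian then ∑ i, |h.eigenvalues i| else 0

/-- The Pauli `Z` matrix. -/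
def PauliZ : Matrix (Fin 2) (Fin 2) ℂ := !![1, 0; 0, -1]

/-- The `+` state `(1,1)/√2` in `ℂ²`. -/
noncomputable def ketPlus : Fin 2 → ℂ := ![(1 : ℂ) / Real.sqrt 2, (1 : ℂ) / Real.sqrt 2]

/-- The rotated ancilla state `|r_α⟩ = exp(iαZ)|+⟩`. -/
noncomputable def rKet (α : ℝ) : Fin 2 → ℂ :=
  (exp ((Complex.I * (α : ℂ)) • PauliZ)).mulVec ketPlus

/-- The pure-state density matrix `|r_α⟩⟨r_α|`. -/
noncomputable def rProj (α : ℝ) : Matrix (Fin 2) (Fin 2) ℂ :=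
  vecMulVec (rKet α) (star (rKet α))

lemma abs_add_abs_eq_of_add_eq_zero {a b r : ℝ} (hr : 0 ≤ r) (hsum : a + b = 0)
    (hprod : a * b = -r ^ 2) : |a| + |b| = 2 * r := by
  obtain rfl : b = -a := by linarith
  have habs : |a| = |r| := (sq_eq_sq_iff_abs_eq_abs a r).mp (by linarith)
  rw [abs_neg, habs, abs_of_nonneg hr]
  ring

lemma smul_add_smul_sub_eq_smul_sub {R M : Type*} [Ring R] [AddCommGroup M] [Module R M]
    {a b : R} (hab : a + b = 1) (x y : M) : a • x + b • y - x = b • (y - x) := by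
  obtain rfl : a = 1 - b := eq_sub_of_add_eq hab
  rw [sub_smul, one_smul, smul_sub]
  abel

lemma Complex.norm_exp_I_mul_ofReal_sub_exp_I_mul_ofReal (x y : ℝ) :
    ‖exp (I * y) - exp (I * x)‖ = 2 * |Real.sin ((y - x) / 2)| := by
  have hfactor : exp (I * y) - exp (I * x) = exp (I * x) * (exp (I * ↑(y - x)) - 1) := by
    rw [mul_sub, mul_one, ← exp_add]
    push_cast
    ring_nf
  rw [hfactor, norm_mul, norm_exp_I_mul_ofReal, one_mul, norm_exp_I_mul_ofReal_sub_one,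
    norm_mul, Real.norm_two, Real.norm_eq_abs]

def hermAntidiag (c : ℂ) : Matrix (Fin 2) (Fin 2) ℂ := !![0, c; starRingEnd ℂ c, 0]

lemma hermAntidiag_isHermitian (c : ℂ) : (hermAntidiag c).IsHermitian := by
  ext i j
  fin_cases i <;> fin_cases j <;> simp [hermAntidiag]

lemma ofReal_smul_hermAntidiag (r : ℝ) (c : ℂ) :
    (r : ℂ) • hermAntidiag c = hermAntidiag (r * c) := by
  ext i j
  fin_cases i <;> fin_cases j <;> simp [hermAntidiag]

lemma trace_hermAntidiag (c : ℂ) : (hermAntidiag c).trace = 0 := by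
  simp [hermAntidiag, trace_fin_two]

lemma det_hermAntidiag (c : ℂ) : (hermAntidiag c).det = -((‖c‖ ^ 2 : ℝ) : ℂ) := by
  simp [hermAntidiag, det_fin_two, Complex.mul_conj, Complex.normSq_eq_norm_sq]

lemma traceNorm_hermAntidiag (c : ℂ) : traceNorm (hermAntidiag c) = 2 * ‖c‖ := by
  have hA := hermAntidiag_isHermitian c
  have htrace := hA.trace_eq_sum_eigenvalues
  have hdet := hA.det_eq_prod_eigenvalues
  rw [trace_hermAntidiag, Fin.sum_univ_two] at htrace
  rw [det_hermAntidiag, Fin.prod_univ_two] at hdet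
  rw [traceNorm, dif_pos hA, Fin.sum_univ_two]
  exact abs_add_abs_eq_of_add_eq_zero (norm_nonneg c)
    (RCLike.ofReal_injective (K := ℂ) (by simpa using htrace.symm))
    (RCLike.ofReal_injective (K := ℂ) (by simpa using hdet.symm))

lemma PauliZ_eq_diagonal : PauliZ = diagonal ![1, -1] := by
  ext i j; fin_cases i <;> fin_cases j <;> simp [PauliZ]

lemma rKet_eq (α : ℝ) :
    rKet α = ![Complex.exp (Complex.I * α) / Real.sqrt 2,
      Complex.exp (-(Complex.I * α)) / Real.sqrt 2] := by
  have hdiag : (Complex.I * (α : ℂ)) • PauliZ = diagonal ![Complex.I * α, -(Complex.I * α)] := by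
    rw [PauliZ_eq_diagonal, ← diagonal_smul]
    congr 1
    ext i; fin_cases i <;> simp
  rw [rKet, hdiag, exp_diagonal, Pi.exp_def]
  ext i
  fin_cases i <;> simp [ketPlus, Complex.exp_eq_exp_ℂ, div_eq_mul_inv]

lemma rProj_eq (α : ℝ) :
    rProj α = !![1 / 2, Complex.exp (Complex.I * (2 * α)) / 2;
      Complex.exp (-(Complex.I * (2 * α))) / 2, 1 / 2] := by
  have hsqrt : ((Real.sqrt 2 : ℝ) : ℂ) * ((Real.sqrt 2 : ℝ) : ℂ) = 2 := by
    rw [← Complex.ofReal_mul, Real.mul_self_sqrt zero_le_two]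
    norm_num
  ext i j
  fin_cases i <;> fin_cases j <;>
    simp [rProj, vecMulVec_apply, rKet_eq, star_div₀, ← Complex.exp_conj,
      div_mul_div_comm, ← Complex.exp_add, hsqrt] <;>
    (congr 1; ring)

lemma rProj_sub_rProj (α β : ℝ) :
    rProj β - rProj α = hermAntidiag
      ((Complex.exp (Complex.I * ↑(2 * β)) - Complex.exp (Complex.I * ↑(2 * α))) / 2) := by
  rw [rProj_eq, rProj_eq]
  push_cast
  ext i j
  fin_cases i <;> fin_cases j <;> simp [hermAntidiag, ← Complex.exp_conj, sub_div, map_ofNat]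

theorem traceDist_mixture_le_general (p_id p_ud : ℝ) (hud : 0 ≤ p_ud)
    (hsum : p_id + p_ud = 1) (φ φ₁ : ℝ) :
    (1 / 2 : ℝ) * traceNorm
        (((p_id : ℂ) • rProj φ + (p_ud : ℂ) • rProj φ₁) - rProj φ)
      ≤ p_ud * |Real.sin (φ - φ₁)| := by
  have hsumℂ : (p_id : ℂ) + p_ud = 1 := by exact_mod_cast hsum
  rw [smul_add_smul_sub_eq_smul_sub hsumℂ, rProj_sub_rProj, ofReal_smul_hermAntidiag,
    traceNorm_hermAntidiag, norm_mul, norm_div, Complex.norm_real, Real.norm_of_nonneg hud,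
    Complex.norm_exp_I_mul_ofReal_sub_exp_I_mul_ofReal, Complex.norm_two,
    show (2 * φ₁ - 2 * φ) / 2 = -(φ - φ₁) by ring, Real.sin_neg, abs_neg]
  apply le_of_eq
  ring

/-- The trace distance of the post-selected mixture
`ρ = p_id |r_φ⟩⟨r_φ| + p_ud |r_{φ₁}⟩⟨r_{φ₁}|` to the ideal rotation state is bounded by
`p_ud |sin(φ - φ₁)|`. -/
theorem traceDist_mixture_le (p_id p_ud : ℝ) (hid : 0 ≤ p_id) (hud : 0 ≤ p_ud)
    (hsum : p_id + p_ud = 1) (φ φ₁ : ℝ) :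
    (1 / 2 : ℝ) * traceNorm
        (((p_id : ℂ) • rProj φ + (p_ud : ℂ) • rProj φ₁) - rProj φ)
      ≤ p_ud * |Real.sin (φ - φ₁)| :=
  traceDist_mixture_le_general p_id p_ud hud hsum φ φ₁
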